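/- For all u, v in the c-ball V_c, the gamma factor satisfies the Einstein gamma identity γ_{u ⊕ v} = γ_u · γ_v · (1 + ⟨u,v⟩/c²); in particular ‖u ⊕ v‖ < c, so that Einstein addition is a binary operation on the ball V_c. -/

import Mathlib

open scoped RealInnerProductSpace

noncomputable def gamma {V : Type*} [NormedAddCommGroup V] [InnerProductSpace ℝ V]
    (c : ℝ) (u : V) : ℝ :=
  1 / Real.sqrt (1 - ‖u‖ ^ 2 / c ^ 2)

noncomputable def eAdd {V : Type*} [NormedAddCommGroup V] [InnerProductSpace ℝ V]
    (c : ℝ) (u v : V) : V :=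
  (1 / (1 + ⟪u, v⟫ / c ^ 2)) •
    (u + (1 / gamma c u) • v +
      ((1 / c ^ 2) * (gamma c u / (1 + gamma c u)) * ⟪u, v⟫) • u)

noncomputable def eGyr {V : Type*} [NormedAddCommGroup V] [InnerProductSpace ℝ V]
    (c : ℝ) (u v w : V) : V :=
  eAdd c (-(eAdd c u v)) (eAdd c u (eAdd c v w))

noncomputable def eCoadd {V : Type*} [NormedAddCommGroup V] [InnerProductSpace ℝ V]
    (c : ℝ) (u v : V) : V :=
  eAdd c u (eGyr c u (-v) v)

noncomputable def mAdd {V : Type*} [NormedAddCommGroup V] [InnerProductSpace ℝ V]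
    (s : ℝ) (u v : V) : V :=
  (1 / (1 + (2 / s ^ 2) * ⟪u, v⟫ + (1 / s ^ 4) * ‖u‖ ^ 2 * ‖v‖ ^ 2)) •
    ((1 + (2 / s ^ 2) * ⟪u, v⟫ + (1 / s ^ 2) * ‖v‖ ^ 2) • u +
      (1 - (1 / s ^ 2) * ‖u‖ ^ 2) • v)

noncomputable def mGyr {V : Type*} [NormedAddCommGroup V] [InnerProductSpace ℝ V]
    (s : ℝ) (u v w : V) : V :=
  mAdd s (-(mAdd s u v)) (mAdd s u (mAdd s v w))

noncomputable def mCoadd {V : Type*} [NormedAddCommGroup V] [InnerProductSpace ℝ V]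
    (s : ℝ) (u v : V) : V :=
  mAdd s u (mGyr s u (-v) v)

noncomputable def artanh (x : ℝ) : ℝ :=
  (1 / 2) * Real.log ((1 + x) / (1 - x))

open Classical in
noncomputable def sMul {V : Type*} [NormedAddCommGroup V] [InnerProductSpace ℝ V]
    (c : ℝ) (r : ℝ) (v : V) : V :=
  if v = 0 then 0 else (c * Real.tanh (r * artanh (‖v‖ / c)) / ‖v‖) • v

variable {V : Type*} [NormedAddCommGroup V] [InnerProductSpace ℝ V]

/-!
Put `D = 1 + ⟪u, v⟫ / c ^ 2`. Up to the factor `D⁻¹`, `u ⊕ v` is the combination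
`(1 + γ_u / (1 + γ_u) * ⟪u, v⟫ / c ^ 2) • u + γ_u⁻¹ • v`; expanding its squared norm and using
`‖u‖ ^ 2 / c ^ 2 = 1 - γ_u⁻²` collapses `1 - ‖u ⊕ v‖ ^ 2 / c ^ 2` to `γ_u⁻² γ_v⁻² / D ^ 2`.
Cauchy–Schwarz gives `D > 0`, so this quantity is positive, i.e. `‖u ⊕ v‖ < c`, and its inverse
square root is `γ_u γ_v D`.
-/

theorem one_sub_sq_div_sq_pos_iff {c x : ℝ} (hc : 0 < c) (hx : 0 ≤ x) :
    0 < 1 - x ^ 2 / c ^ 2 ↔ x < c := by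
  rw [sub_pos, div_lt_one (by positivity), pow_lt_pow_iff_left₀ hx hc.le two_ne_zero]

theorem one_sub_norm_sq_div_sq_pos {E : Type*} [SeminormedAddGroup E] {c : ℝ} {x : E}
    (hx : ‖x‖ < c) : 0 < 1 - ‖x‖ ^ 2 / c ^ 2 :=
  (one_sub_sq_div_sq_pos_iff ((norm_nonneg x).trans_lt hx) (norm_nonneg x)).2 hx

theorem norm_smul_add_smul_sq (a b : ℝ) (u v : V) :
    ‖a • u + b • v‖ ^ 2 = a ^ 2 * ‖u‖ ^ 2 + 2 * a * b * ⟪u, v⟫ + b ^ 2 * ‖v‖ ^ 2 := by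
  rw [norm_add_sq_real, norm_smul, norm_smul, real_inner_smul_left, real_inner_smul_right,
    mul_pow, mul_pow, Real.norm_eq_abs, Real.norm_eq_abs, sq_abs, sq_abs]
  ring

section Ball

variable {c : ℝ} {u v : V}

theorem one_add_inner_div_sq_pos (hu : ‖u‖ < c) (hv : ‖v‖ < c) :
    0 < 1 + ⟪u, v⟫ / c ^ 2 := by
  have hc : 0 < c := (norm_nonneg u).trans_lt hu
  have hinner : |⟪u, v⟫| < c ^ 2 := calc
    |⟪u, v⟫| ≤ ‖u‖ * ‖v‖ := abs_real_inner_le_norm u v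
    _ < c ^ 2 := by nlinarith [norm_nonneg u, norm_nonneg v]
  have : -1 < ⟪u, v⟫ / c ^ 2 := by
    rw [lt_div_iff₀ (by positivity)]
    linarith [neg_abs_le ⟪u, v⟫]
  linarith

theorem gamma_pos (hu : ‖u‖ < c) : 0 < gamma c u := by
  have := one_sub_norm_sq_div_sq_pos hu
  unfold gamma
  positivity

theorem gamma_sq_mul (hu : ‖u‖ < c) : gamma c u ^ 2 * (1 - ‖u‖ ^ 2 / c ^ 2) = 1 := by
  have := one_sub_norm_sq_div_sq_pos hu
  rw [gamma, div_pow, Real.sq_sqrt this.le, one_pow, one_div_mul_cancel this.ne']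

theorem eAdd_eq_smul (c : ℝ) (u v : V) :
    eAdd c u v = (1 + ⟪u, v⟫ / c ^ 2)⁻¹ •
      ((1 + gamma c u / (1 + gamma c u) * ⟪u, v⟫ / c ^ 2) • u + (gamma c u)⁻¹ • v) := by
  rw [eAdd]
  congr 1
  · simp
  · module

theorem one_sub_norm_eAdd_sq_div_sq (hu : ‖u‖ < c) (hD : 1 + ⟪u, v⟫ / c ^ 2 ≠ 0) :
    1 - ‖eAdd c u v‖ ^ 2 / c ^ 2 =
      (1 - ‖u‖ ^ 2 / c ^ 2) * (1 - ‖v‖ ^ 2 / c ^ 2) / (1 + ⟪u, v⟫ / c ^ 2) ^ 2 := by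
  have hc : 0 < c := (norm_nonneg u).trans_lt hu
  have hg := gamma_pos hu
  have hD' : c ^ 2 + ⟪u, v⟫ ≠ 0 := by
    contrapose! hD
    field_simp
    linarith
  have hu2 : ‖u‖ ^ 2 = c ^ 2 * (1 - 1 / gamma c u ^ 2) := by
    have := gamma_sq_mul hu
    field_simp at this ⊢
    linarith
  rw [eAdd_eq_smul, norm_smul, mul_pow, norm_smul_add_smul_sq, hu2, Real.norm_eq_abs, sq_abs]
  field_simp
  ring

theorem norm_eAdd_lt (hu : ‖u‖ < c) (hv : ‖v‖ < c) : ‖eAdd c u v‖ < c := by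
  have hD := one_add_inner_div_sq_pos hu hv
  refine (one_sub_sq_div_sq_pos_iff ((norm_nonneg u).trans_lt hu) (norm_nonneg _)).1 ?_
  rw [one_sub_norm_eAdd_sq_div_sq hu hD.ne']
  have := one_sub_norm_sq_div_sq_pos hu
  have := one_sub_norm_sq_div_sq_pos hv
  positivity

theorem gamma_eAdd (hu : ‖u‖ < c) (hv : ‖v‖ < c) :
    gamma c (eAdd c u v) = gamma c u * gamma c v * (1 + ⟪u, v⟫ / c ^ 2) := by
  have hD := one_add_inner_div_sq_pos hu hv
  rw [gamma, gamma, gamma, one_sub_norm_eAdd_sq_div_sq hu hD.ne', Real.sqrt_div',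
    Real.sqrt_sq hD.le, Real.sqrt_mul' _ (one_sub_norm_sq_div_sq_pos hv).le]
  · field_simp
  · positivity

end Ball

theorem einstein_gamma_identity_general (c : ℝ) (u v : V)
    (hu : ‖u‖ < c) (hv : ‖v‖ < c) :
    gamma c (eAdd c u v) = gamma c u * gamma c v * (1 + ⟪u, v⟫ / c ^ 2) ∧
    ‖eAdd c u v‖ < c :=
  ⟨gamma_eAdd hu hv, norm_eAdd_lt hu hv⟩

theorem einstein_gamma_identity (c : ℝ) (hc : 0 < c) (u v : V)
    (hu : ‖u‖ < c) (hv : ‖v‖ < c) :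
    gamma c (eAdd c u v) = gamma c u * gamma c v * (1 + ⟪u, v⟫ / c ^ 2) ∧
    ‖eAdd c u v‖ < c :=
  einstein_gamma_identity_general c u v hu hv
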